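/- arXiv:2103.16251 — 3 statements merged into one kernel-verified Lean document; each statement's English description precedes it below -/
import Mathlib

section
/- Let G be a simple graph whose girth is at least g (i.e., every cycle of G has length at least g), and let u ≠ v be two nonadjacent vertices of G such that either there is no path from u to v in G or the graph distance between u and v in G is at least g − 1. Then the graph G + uv obtained from G by adding the edge {u, v} also has girth at least g. -/
open SimpleGraph

private lemma cycle_len_aux {V : Type*} (G : SimpleGraph V) (g : ℕ)
    (hG : ∀ (a : V) (w : G.Walk a a), w.IsCycle → g ≤ w.length)
    (u v : V) (huv : u ≠ v) (hadj : ¬ G.Adj u v)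
    (hfar : ¬ G.Reachable u v ∨ g - 1 ≤ G.dist u v)
    {a : V} (w : (G ⊔ SimpleGraph.fromEdgeSet {s(u, v)}).Walk a a) (hw : w.IsCycle) :
    g ≤ w.length := by
  classical
  have hedge : ∀ e ∈ (G ⊔ SimpleGraph.fromEdgeSet {s(u, v)}).edgeSet,
      e ≠ s(u, v) → e ∈ G.edgeSet := by
    intro e he hne
    rw [edgeSet_sup, edgeSet_fromEdgeSet] at he
    rcases he with he | he
    · exact he
    · exact absurd he.1 (by simpa using hne)
  by_cases he : s(u, v) ∈ w.edges
  · -- the cycle uses the new edge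
    have hu : u ∈ w.support := w.fst_mem_support_of_mem_edges he
    set w' := w.rotate u hu with hw'
    have hc' : w'.IsCycle := hw.rotate hu
    have hperm := (w.rotate_edges u hu).perm
    have hlen : w'.length = w.length := by
      rw [← Walk.length_edges, ← Walk.length_edges]
      exact hperm.length_eq
    have he' : s(u, v) ∈ w'.edges := hperm.mem_iff.mpr he
    have hv : v ∈ w'.support := w'.snd_mem_support_of_mem_edges he'
    have hspec := w'.take_spec hv
    set q1 := w'.takeUntil v hv with hq1
    set q2 := w'.dropUntil v hv with hq2
    have hedges : w'.edges = q1.edges ++ q2.edges := by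
      rw [← hspec, Walk.edges_append]
    have hnodup : (q1.edges ++ q2.edges).Nodup := hedges ▸ hc'.edges_nodup
    have hlen12 : q1.length + q2.length = w'.length := by
      have := congrArg Walk.length hspec
      rwa [Walk.length_append] at this
    have hq1pos : 1 ≤ q1.length := by
      rcases Nat.eq_zero_or_pos q1.length with h0 | h
      · exact absurd (Walk.eq_of_length_eq_zero h0) huv
      · exact h
    have hq2pos : 1 ≤ q2.length := by
      rcases Nat.eq_zero_or_pos q2.length with h0 | h
      · exact absurd (Walk.eq_of_length_eq_zero h0).symm huv
      · exact h
    -- the edge lies in exactly one of q1, q2; the other avoids it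
    rw [hedges, List.mem_append] at he'
    have key : ∃ n : ℕ, G.dist u v ≤ n ∧ n + 1 ≤ w'.length ∧ G.Reachable u v := by
      rcases he' with h1 | h2
      · -- edge in q1, so q2 (from v to u) avoids it
        have havoid : ∀ e ∈ q2.edges, e ∈ G.edgeSet := by
          intro e heq2
          refine hedge e (Walk.edges_subset_edgeSet w' (hedges ▸ List.mem_append_right _ heq2)) ?_
          rintro rfl
          exact (List.disjoint_of_nodup_append hnodup) h1 heq2
        refine ⟨q2.length, ?_, by omega, (q2.transfer G havoid).reverse.reachable⟩
        calc G.dist u v ≤ (q2.transfer G havoid).reverse.length := SimpleGraph.dist_le _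
          _ = q2.length := by rw [Walk.length_reverse, Walk.length_transfer]
      · -- edge in q2, so q1 (from u to v) avoids it
        have havoid : ∀ e ∈ q1.edges, e ∈ G.edgeSet := by
          intro e heq1
          refine hedge e (Walk.edges_subset_edgeSet w' (hedges ▸ List.mem_append_left _ heq1)) ?_
          rintro rfl
          exact (List.disjoint_of_nodup_append hnodup) heq1 h2
        refine ⟨q1.length, ?_, by omega, (q1.transfer G havoid).reachable⟩
        calc G.dist u v ≤ (q1.transfer G havoid).length := SimpleGraph.dist_le _
          _ = q1.length := Walk.length_transfer _ _
    obtain ⟨n, hdn, hnw, hreach⟩ := key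
    rcases hfar with hfar | hfar
    · exact absurd hreach hfar
    · omega
  · -- the cycle avoids the new edge: transfer to G
    have havoid : ∀ e ∈ w.edges, e ∈ G.edgeSet := fun e hew =>
      hedge e (Walk.edges_subset_edgeSet w hew) (fun h => he (h ▸ hew))
    have := hG a (w.transfer G havoid) (hw.transfer havoid)
    rwa [Walk.length_transfer] at this

/-- Adding an edge between two nonadjacent vertices `u ≠ v` that are either in
different connected components or at graph distance at least `g - 1` preserves the
property of having girth at least `g` (every cycle has length at least `g`). -/
theorem stmt6 {V : Type*} (G : SimpleGraph V) (g : ℕ) (hg : (g : ℕ∞) ≤ G.girth)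
    (u v : V) (huv : u ≠ v) (hadj : ¬ G.Adj u v)
    (hfar : ¬ G.Reachable u v ∨ g - 1 ≤ G.dist u v) :
    (g : ℕ∞) ≤ (G ⊔ SimpleGraph.fromEdgeSet {s(u, v)}).girth := by
  -- first get the egirth bound for G
  have hEG : (g : ℕ∞) ≤ G.egirth := by
    by_cases hac : G.IsAcyclic
    · rw [hac.egirth_eq_top]; exact le_top
    · have hne : G.egirth ≠ ⊤ := fun h => hac (egirth_eq_top.mp h)
      have : (G.girth : ℕ∞) = G.egirth := ENat.coe_toNat hne
      rw [← this]
      exact_mod_cast hg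
  have hG : ∀ (a : V) (w : G.Walk a a), w.IsCycle → g ≤ w.length := by
    intro a w hw
    have := le_egirth.mp hEG a w hw
    exact_mod_cast this
  set G' := G ⊔ SimpleGraph.fromEdgeSet {s(u, v)} with hG'
  by_cases hac : G'.IsAcyclic
  · have hacG : G.IsAcyclic := fun a w hw => hac (w.mapLe le_sup_left) (hw.mapLe _)
    have h0 : G.girth = 0 := hacG.girth_eq_zero
    rw [h0] at hg
    have : g = 0 := by exact_mod_cast le_zero_iff.mp (by exact_mod_cast hg)
    simp [this]
  · obtain ⟨a, w, hw, hlen⟩ := exists_girth_eq_length.mpr hac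
    rw [hlen]
    exact_mod_cast cycle_len_aux G g hG u v huv hadj hfar w hw
end

section
/- Let H_1, …, H_Δ be pairwise edge-disjoint simple graphs on a common finite vertex set V(H), and suppose that every cycle of the simple graph on V(H) whose edge set is the union of the edge sets of H_1, …, H_Δ has length strictly greater than n. Let T be a tree on at most n vertices equipped with a proper edge coloring φ : E(T) → {1, …, Δ} (edges sharing an endpoint receive distinct colors), and let h : V(T) → V(H) be a map such that for every edge {u, v} of T of color c, the vertices h(u) and h(v) are adjacent in H_c. Then h is injective. -/
open SimpleGraph

/-- Let `H 1, …, H Δ` be pairwise edge-disjoint graphs on a common finite vertex set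
`VH` such that every cycle of their union has length strictly greater than `n`.  Let
`T` be a tree on at most `n` vertices with a proper edge coloring
`φ : Sym2 VT → Fin Δ` (edges sharing an endpoint receive distinct colors), and let
`h : VT → VH` be a proper `H`-labeling of `T` (endpoints of an edge of color `c` are
sent to adjacent vertices of `H c`).  Then `h` is injective. -/
theorem stmt9 {VT VH : Type*} [Fintype VT] [Fintype VH] {Δ n : ℕ}
    (H : Fin Δ → SimpleGraph VH)
    (hdisj : Pairwise fun i j => Disjoint (H i).edgeSet (H j).edgeSet)
    (hgirth : (n : ℕ∞) < (⨆ i, H i).girth)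
    (T : SimpleGraph VT) (hT : T.IsTree) (hcard : Fintype.card VT ≤ n)
    (φ : Sym2 VT → Fin Δ)
    (hproper : ∀ u v w : VT, T.Adj u v → T.Adj u w → v ≠ w → φ s(u, v) ≠ φ s(u, w))
    (h : VT → VH)
    (hlab : ∀ u v : VT, T.Adj u v → (H (φ s(u, v))).Adj (h u) (h v)) :
    Function.Injective h := by
  classical
  set G := ⨆ i, H i with hGdef
  -- two distinct neighbors of a common vertex have distinct labels
  have hcommon : ∀ a x y : VT, T.Adj a x → T.Adj a y → x ≠ y → h x ≠ h y := by
    intro a x y hax hay hxy hxy'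
    have hc := hproper a x y hax hay hxy
    have h1 := hlab a x hax
    have h2 := hlab a y hay
    rw [← hxy'] at h2
    exact Set.disjoint_left.mp (hdisj hc)
      ((H _).mem_edgeSet.mpr h1) ((H _).mem_edgeSet.mpr h2)
  have hf : ∀ {x y : VT}, T.Adj x y → G.Adj (h x) (h y) := by
    intro x y hadj
    exact iSup_adj.mpr ⟨φ s(x, y), hlab x y hadj⟩
  let f : T →g G := ⟨h, fun {x y} hadj => hf hadj⟩
  have key : ∀ ℓ : ℕ, ∀ u v : VT, ∀ p : T.Walk u v,
      p.IsPath → p.length = ℓ → h u = h v → u = v := by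
    intro ℓ
    induction ℓ using Nat.strong_induction_on with
    | _ ℓ IH =>
    intro u v p hp hlen huv
    by_contra hne
    have hℓpos : 0 < ℓ := Nat.pos_of_ne_zero fun h0 =>
      hne (Walk.eq_of_length_eq_zero (p := p) (by omega))
    have hnodup : p.support.Nodup := hp.support_nodup
    have hu_tail : u ∉ p.support.tail := by
      have hn := hnodup
      rw [p.support_eq_cons] at hn
      exact (List.nodup_cons.mp hn).1
    have hv_tail : v ∈ p.support.tail := by
      have hvs := p.end_mem_support
      rw [p.support_eq_cons] at hvs
      rcases List.mem_cons.mp hvs with hvu | hvt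
      · exact absurd hvu.symm hne
      · exact hvt
    -- injectivity of `h` on the tail of the support, by minimality
    have tailinj : ∀ x ∈ p.support.tail, ∀ y ∈ p.support.tail, h x = h y → x = y := by
      intro x hx y hy hxy
      by_contra hxyne
      have hxs : x ∈ p.support := List.mem_of_mem_tail hx
      have hys : y ∈ p.support := List.mem_of_mem_tail hy
      have hxu : x ≠ u := fun e => hu_tail (e ▸ hx)
      have hyu : y ≠ u := fun e => hu_tail (e ▸ hy)
      have hspec := p.take_spec hxs
      have hlen2 : (p.takeUntil x hxs).length + (p.dropUntil x hxs).length = ℓ := by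
        rw [← Walk.length_append, hspec, hlen]
      have htpos : 0 < (p.takeUntil x hxs).length := by
        rcases Nat.eq_zero_or_pos (p.takeUntil x hxs).length with h0 | hpos
        · exact absurd (Walk.eq_of_length_eq_zero h0).symm hxu
        · exact hpos
      have hy2 : y ∈ (p.takeUntil x hxs).support ∨ y ∈ (p.dropUntil x hxs).support := by
        rw [← hspec, Walk.mem_support_append_iff] at hys
        exact hys
      rcases hy2 with hy2 | hy2
      · -- y comes before x
        set q1 := p.takeUntil x hxs with hq1
        have hq1p : q1.IsPath := hp.takeUntil hxs
        have hlen3 : (q1.takeUntil y hy2).length + (q1.dropUntil y hy2).length = q1.length := by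
          rw [← Walk.length_append, q1.take_spec hy2]
        have hupos : 0 < (q1.takeUntil y hy2).length := by
          rcases Nat.eq_zero_or_pos (q1.takeUntil y hy2).length with h0 | hpos
          · exact absurd (Walk.eq_of_length_eq_zero h0).symm hyu
          · exact hpos
        have hlt : (q1.dropUntil y hy2).length < ℓ := by omega
        exact hxyne (IH _ hlt y x (q1.dropUntil y hy2) (hq1p.dropUntil hy2) rfl hxy.symm).symm
      · -- y comes after x
        set q2 := p.dropUntil x hxs with hq2
        have hq2p : q2.IsPath := hp.dropUntil hxs
        have hlt : (q2.takeUntil y hy2).length < ℓ := by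
          have := q2.length_takeUntil_le hy2
          omega
        exact hxyne (IH _ hlt x y (q2.takeUntil y hy2) (hq2p.takeUntil hy2) rfl hxy)
    -- almost-injectivity of `h` on the whole support
    have hinj2 : ∀ x ∈ p.support, ∀ y ∈ p.support, h x = h y →
        x = y ∨ (x = u ∧ y = v) ∨ (x = v ∧ y = u) := by
      intro x hx y hy hxy
      rw [p.support_eq_cons] at hx hy
      rcases List.mem_cons.mp hx with rfl | hx' <;> rcases List.mem_cons.mp hy with rfl | hy'
      · left; rfl
      · right; left
        exact ⟨rfl, tailinj y hy' v hv_tail (hxy.symm.trans huv)⟩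
      · right; right
        exact ⟨tailinj x hx' v hv_tail (hxy.trans huv), rfl⟩
      · left; exact tailinj x hx' y hy' hxy
    -- no two edges of the path are identified by `h`
    have aux : ∀ a b c d : VT, T.Adj a b → T.Adj c d →
        a ∈ p.support → b ∈ p.support → c ∈ p.support → d ∈ p.support →
        h a = h c → h b = h d → s(a, b) = s(c, d) := by
      intro a b c d hab hcd ha hb hc hd hac hbd
      rcases hinj2 a ha c hc hac with h1 | ⟨ha1, hc1⟩ | ⟨ha1, hc1⟩ <;>
        rcases hinj2 b hb d hd hbd with h2 | ⟨hb1, hd1⟩ | ⟨hb1, hd1⟩ <;>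
        subst_vars <;>
        first
          | rfl
          | exact Sym2.eq_swap
          | exact absurd rfl hab.ne
          | exact absurd rfl hcd.ne
          | exact absurd huv (hcommon _ _ _ hab hcd hne)
          | exact absurd huv.symm (hcommon _ _ _ hab hcd (Ne.symm hne))
          | exact absurd huv (hcommon _ _ _ hab.symm hcd.symm hne)
          | exact absurd huv.symm (hcommon _ _ _ hab.symm hcd.symm (Ne.symm hne))
    -- the image walk is a cycle of length `ℓ` in `G`
    let W : G.Walk (h u) (h u) := (p.map f).copy rfl huv.symm
    have hWlen : W.length = ℓ := by
      simp only [W, Walk.length_copy, Walk.length_map, hlen]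
    have htrail : W.edges.Nodup := by
      simp only [W, Walk.edges_copy, Walk.edges_map]
      refine List.Nodup.map_on ?_ hp.isTrail.edges_nodup
      intro e1 he1 e2 he2
      induction e1 using Sym2.ind with
      | _ a b =>
      induction e2 using Sym2.ind with
      | _ c d =>
      intro hmap
      rw [Sym2.map_pair_eq, Sym2.map_pair_eq] at hmap
      have hab := p.adj_of_mem_edges he1
      have hcd := p.adj_of_mem_edges he2
      have ha := p.fst_mem_support_of_mem_edges he1
      have hb := p.snd_mem_support_of_mem_edges he1
      have hc := p.fst_mem_support_of_mem_edges he2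
      have hd := p.snd_mem_support_of_mem_edges he2
      rcases Sym2.eq_iff.mp hmap with ⟨h1, h2⟩ | ⟨h1, h2⟩
      · exact aux a b c d hab hcd ha hb hc hd h1 h2
      · exact (aux a b d c hab hcd.symm ha hb hd hc h1 h2).trans Sym2.eq_swap
    have htail : W.support.tail.Nodup := by
      have hsupp : W.support = p.support.map h := by
        simp only [W, Walk.support_copy, Walk.support_map]; rfl
      rw [hsupp, ← List.map_tail]
      exact List.Nodup.map_on tailinj hnodup.tail
    have hWnil : W ≠ Walk.nil := by
      intro hWn
      have : W.length = 0 := by rw [hWn]; rfl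
      omega
    have hcyc : W.IsCycle := ⟨⟨⟨htrail⟩, hWnil⟩, htail⟩
    have hE : G.egirth ≤ (ℓ : ℕ∞) := by
      have := SimpleGraph.le_egirth.mp le_rfl (h u) W hcyc
      rwa [hWlen] at this
    have hgir : G.girth ≤ ℓ := by
      have := ENat.toNat_le_toNat hE (by simp)
      simpa [SimpleGraph.girth] using this
    have hn : n < G.girth := by exact_mod_cast hgirth
    have hsl : p.support.length ≤ Fintype.card VT := hnodup.length_le_card
    rw [Walk.length_support, hlen] at hsl
    omega
  intro a b hab
  obtain ⟨w⟩ := hT.isConnected.preconnected a b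
  exact key (w.toPath : T.Walk a b).length a b w.toPath w.toPath.2 rfl hab
end

section
/- Let Δ ≥ 2, c₁ ≥ 1, c₂ ≥ 1 be integers and let c₃ be a positive real with c₃ < c₁ − 4c₂ − 2. Then there exists a constant C = C(Δ, c₁, c₂, c₃) such that the following holds for all sufficiently large n. Let G be a simple graph on n vertices with maximum degree at most Δ. Let (Ω_v, μ_v)_{v ∈ V(G)} be probability spaces and let Ω be their product equipped with the product measure. Let B : Ω → 2^{V(G)} be a random subset of V(G) such that for every vertex v: (i) the event {v ∈ B} is measurable with respect to the coordinates ω_u for vertices u at graph distance at most c₂ from v, and (ii) Pr[v ∈ B] ≤ Δ^{−c₁}. Then with probability at least 1 − n^{−c₃}, every connected component of the subgraph of G induced by B has at most C·log n vertices. -/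
open MeasureTheory ENNReal Set
set_option linter.unusedSectionVars false
set_option linter.unusedVariables false
attribute [local instance] Classical.propDecidable

section Indep

variable {V : Type} [Fintype V] {Ω : V → Type} [∀ v, MeasurableSpace (Ω v)]
  (μ : ∀ v, Measure (Ω v)) [∀ v, IsProbabilityMeasure (μ v)]

/-- restriction to a set of coordinates -/
def restr (T : Set V) (ω : ∀ v, Ω v) (u : T) : Ω u.1 := ω u.1

lemma measurable_restr_aux (T T' : Set V) (h : T' ⊆ T) :
    Measurable (fun (x : ∀ v : T, Ω v) (u : T') => x ⟨u.1, h u.2⟩) :=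
  measurable_pi_lambda _ (fun u => measurable_pi_apply _)

/-- key two-block product lemma -/
lemma two_block (T : Set V) (E : Set (∀ v : T, Ω v)) (hE : MeasurableSet E)
    (Q : Set (∀ v : {v : V // v ∉ T}, Ω v)) (hQ : MeasurableSet Q) :
    Measure.pi μ (restr T ⁻¹' E ∩ (fun ω (u : {v : V // v ∉ T}) => ω u.1) ⁻¹' Q)
      = Measure.pi (fun v : T => μ v) E * Measure.pi (fun v : {v : V // v ∉ T} => μ v) Q := by
  classical
  have hmp := measurePreserving_piEquivPiSubtypeProd (α := Ω) μ (· ∈ T)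
  have hset : restr (Ω := Ω) T ⁻¹' E ∩ (fun ω (u : {v : V // v ∉ T}) => ω u.1) ⁻¹' Q
      = (MeasurableEquiv.piEquivPiSubtypeProd Ω (· ∈ T)) ⁻¹' (E ×ˢ Q) := rfl
  rw [hset, hmp.measure_preimage (hE.prod hQ).nullMeasurableSet, Measure.prod_prod]

end Indep

section Indep2
variable {V : Type} [Fintype V] {Ω : V → Type} [∀ v, MeasurableSpace (Ω v)]
  (μ : ∀ v, Measure (Ω v)) [∀ v, IsProbabilityMeasure (μ v)]

lemma restr_compl_factor (T : V → Set V) (a : V) (u : V) (h : ∀ x ∈ T u, x ∉ T a) (ω : ∀ v, Ω v) :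
    restr (Ω := Ω) (T u) ω = (fun (x : ∀ v : {v : V // v ∉ T a}, Ω v) (w : T u) => x ⟨w.1, h w.1 w.2⟩)
      ((fun ω (u' : {v : V // v ∉ T a}) => ω u'.1) ω) := rfl

lemma indep_blocks (T : V → Set V) (E : ∀ u, Set (∀ v : T u, Ω v))
    (hE : ∀ u, MeasurableSet (E u)) (F : Finset V)
    (hdisj : ∀ u ∈ F, ∀ w ∈ F, u ≠ w → Disjoint (T u) (T w)) :
    Measure.pi μ (⋂ u ∈ F, restr (T u) ⁻¹' (E u))
      = ∏ u ∈ F, Measure.pi μ (restr (T u) ⁻¹' (E u)) := by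
  classical
  induction F using Finset.induction_on with
  | empty => simp
  | @insert a F ha IH =>
    have hsub : ∀ u ∈ F, ∀ x ∈ T u, x ∉ T a := by
      intro u hu x hxu hxa
      exact (hdisj a (Finset.mem_insert_self a F) u (Finset.mem_insert_of_mem hu)
        (fun h => ha (h ▸ hu))).symm.ne_of_mem hxu hxa rfl
    set Q : Set (∀ v : {v : V // v ∉ T a}, Ω v) :=
      ⋂ u, ⋂ (hu : u ∈ F),
        (fun (x : ∀ v : {v : V // v ∉ T a}, Ω v) (w : T u) => x ⟨w.1, hsub u hu w.1 w.2⟩) ⁻¹' (E u)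
      with hQdef
    have hQmeas : MeasurableSet Q := by
      refine MeasurableSet.iInter (fun u => MeasurableSet.iInter (fun hu => ?_))
      exact (measurable_pi_lambda _ (fun w => measurable_pi_apply _)) (hE u)
    have hrest : (⋂ u ∈ F, restr (Ω := Ω) (T u) ⁻¹' (E u))
        = (fun ω (u' : {v : V // v ∉ T a}) => ω u'.1) ⁻¹' Q := by
      ext ω
      simp only [hQdef, Set.mem_iInter, Set.mem_preimage]
      rfl
    have h1 : Measure.pi μ (⋂ u ∈ insert a F, restr (T u) ⁻¹' (E u))
        = Measure.pi (fun v : T a => μ v) (E a)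
          * Measure.pi (fun v : {v : V // v ∉ T a} => μ v) Q := by
      rw [show (⋂ u ∈ insert a F, restr (T u) ⁻¹' (E u)) = restr (T a) ⁻¹' (E a) ∩ ⋂ u ∈ F, restr (T u) ⁻¹' (E u) from Finset.set_biInter_insert .., hrest]
      exact two_block μ (T a) (E a) (hE a) Q hQmeas
    have h2 : Measure.pi μ (restr (T a) ⁻¹' (E a)) = Measure.pi (fun v : T a => μ v) (E a) := by
      have := two_block μ (T a) (E a) (hE a) (Set.univ) MeasurableSet.univ
      simpa using this
    have h3 : Measure.pi μ (⋂ u ∈ F, restr (T u) ⁻¹' (E u))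
        = Measure.pi (fun v : {v : V // v ∉ T a} => μ v) Q := by
      rw [hrest]
      have := two_block μ (T a) (Set.univ) MeasurableSet.univ Q hQmeas
      simpa using this
    rw [Finset.prod_insert ha, ← IH (fun u hu w hw hne => hdisj u (Finset.mem_insert_of_mem hu) w
      (Finset.mem_insert_of_mem hw) hne), h1, h2, h3]
end Indep2

open MeasureTheory ENNReal Set SimpleGraph
set_option linter.unusedSectionVars false
set_option linter.unusedVariables false
attribute [local instance] Classical.propDecidable

section Balls
variable {V : Type} [Fintype V] (G : SimpleGraph V) (Δ : ℕ)

/-- vertices at edist exactly i from v -/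
noncomputable def lev (v : V) (i : ℕ) : Finset V :=
  Finset.univ.filter (fun u => G.edist v u = (i : ℕ∞))

/-- vertices at edist in [1, r] from v -/
noncomputable def ballAnn (v : V) (r : ℕ) : Finset V :=
  Finset.univ.filter (fun u => G.edist v u ≠ 0 ∧ G.edist v u ≤ (r : ℕ∞))

lemma exists_adj_lev {v u : V} {i : ℕ} (h : G.edist v u = ((i + 1 : ℕ) : ℕ∞)) :
    ∃ w, G.Adj w u ∧ G.edist v w = (i : ℕ) := by
  obtain ⟨p, hp⟩ := exists_walk_of_edist_eq_coe h
  cases hq : p.reverse with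
  | nil =>
    exfalso
    have := congrArg Walk.length hq
    simp [hp] at this
  | cons hadj q =>
    rename_i x
    refine ⟨x, hadj.symm, le_antisymm ?_ ?_⟩
    · have hlen : q.reverse.length = i := by
        have := congrArg Walk.length hq
        simp [hp] at this
        simp [this]
      calc G.edist v x ≤ q.reverse.length := edist_le _
        _ = (i : ℕ∞) := by rw [hlen]
    · by_contra hlt
      push_neg at hlt
      have h2 : G.edist v u ≤ G.edist v x + G.edist x u := SimpleGraph.edist_triangle
      have h3 : G.edist x u ≤ 1 := by
        simpa using edist_le (hadj.symm.toWalk)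
      have h5 : G.edist v x + 1 ≤ (i : ℕ∞) := Order.add_one_le_of_lt hlt
      have h6 : ((i + 1 : ℕ) : ℕ∞) ≤ (i : ℕ∞) := by
        calc ((i + 1 : ℕ) : ℕ∞) = G.edist v u := h.symm
          _ ≤ G.edist v x + G.edist x u := h2
          _ ≤ G.edist v x + 1 := add_le_add le_rfl h3
          _ ≤ (i : ℕ∞) := h5
      have := Nat.cast_le.mp h6
      omega
end Balls

section LevBounds
variable {V : Type} [Fintype V] {G : SimpleGraph V} {Δ : ℕ}
  (hdeg : ∀ v : V, (G.neighborFinset v).card ≤ Δ)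
include hdeg

lemma lev_one_le (v : V) : (lev G v 1).card ≤ Δ := by
  refine le_trans (Finset.card_le_card ?_) (hdeg v)
  intro u hu
  simp only [lev, Finset.mem_filter] at hu
  rw [mem_neighborFinset]
  exact (edist_eq_one_iff_adj).mp (by exact_mod_cast hu.2)

lemma lev_succ_le (v : V) (i : ℕ) (hi : 1 ≤ i) :
    (lev G v (i + 1)).card ≤ (Δ - 1) * (lev G v i).card := by
  classical
  have hsub : lev G v (i + 1) ⊆ (lev G v i).biUnion
      (fun w => G.neighborFinset w ∩ lev G v (i + 1)) := by
    intro u hu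
    simp only [lev, Finset.mem_filter, Finset.mem_univ, true_and] at hu
    obtain ⟨w, hadj, hw⟩ := exists_adj_lev G hu
    refine Finset.mem_biUnion.mpr ⟨w, ?_, ?_⟩
    · simp [lev, hw]
    · simp [mem_neighborFinset, hadj, lev, hu]
  refine le_trans (le_trans (Finset.card_le_card hsub) (Finset.card_biUnion_le)) ?_
  refine le_trans (Finset.sum_le_sum (fun w hw => ?_))
    (le_of_eq (by rw [Finset.sum_const, smul_eq_mul, mul_comm]))
  -- goal: (nbrs w ∩ lev (i+1)).card ≤ Δ - 1
  simp only [lev, Finset.mem_filter, Finset.mem_univ, true_and] at hw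
  obtain ⟨i', rfl⟩ : ∃ i', i = i' + 1 := ⟨i - 1, by omega⟩
  obtain ⟨w', hadj', hw'⟩ := exists_adj_lev G hw
  have hw'notin : w' ∉ lev G v (i' + 1 + 1) := by
    simp only [lev, Finset.mem_filter, Finset.mem_univ, true_and, hw']
    intro hcontra
    have : i' = i' + 1 + 1 := Nat.cast_injective hcontra
    omega
  have hsub2 : G.neighborFinset w ∩ lev G v (i' + 1 + 1) ⊆
      (G.neighborFinset w).erase w' := by
    intro x hx
    simp only [Finset.mem_inter] at hx
    refine Finset.mem_erase.mpr ⟨?_, hx.1⟩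
    rintro rfl
    exact hw'notin hx.2
  calc (G.neighborFinset w ∩ lev G v (i' + 1 + 1)).card
      ≤ ((G.neighborFinset w).erase w').card := Finset.card_le_card hsub2
    _ ≤ (G.neighborFinset w).card - 1 := by
        rw [Finset.card_erase_of_mem (by rw [mem_neighborFinset]; exact hadj'.symm)]
    _ ≤ Δ - 1 := by have := hdeg w; omega

lemma lev_le (v : V) (i : ℕ) (hi : 1 ≤ i) :
    (lev G v i).card ≤ Δ * (Δ - 1) ^ (i - 1) := by
  induction i with
  | zero => omega
  | succ j IH =>
    rcases Nat.eq_or_lt_of_le hi with h1 | h1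
    · have hj0 : j = 0 := by omega
      subst hj0
      simpa using lev_one_le hdeg v
    · have hj : 1 ≤ j := by omega
      calc (lev G v (j + 1)).card ≤ (Δ - 1) * (lev G v j).card := lev_succ_le hdeg v j hj
        _ ≤ (Δ - 1) * (Δ * (Δ - 1) ^ (j - 1)) := Nat.mul_le_mul_left _ (IH hj)
        _ = Δ * ((Δ - 1) * (Δ - 1) ^ (j - 1)) := by ring
        _ = Δ * (Δ - 1) ^ (j + 1 - 1) := by
            congr 1
            rw [← pow_succ']
            congr 1
            omega

lemma ballAnn_card_le (v : V) (r : ℕ) :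
    (ballAnn G v r).card ≤ ∑ i ∈ Finset.range r, Δ * (Δ - 1) ^ i := by
  classical
  have hsub : ballAnn G v r ⊆ (Finset.range r).biUnion (fun i => lev G v (i + 1)) := by
    intro u hu
    simp only [ballAnn, Finset.mem_filter, Finset.mem_univ, true_and] at hu
    obtain ⟨h1, h2⟩ := hu
    have hne : G.edist v u ≠ ⊤ := ne_top_of_le_ne_top (ENat.coe_ne_top r) h2
    obtain ⟨k, hk⟩ := WithTop.ne_top_iff_exists.mp hne
    have hk1 : 1 ≤ k := by
      by_contra h
      push_neg at h
      interval_cases k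
      simp at hk
      exact h1 hk.symm
    have hkr : k ≤ r := by
      rw [← hk] at h2
      exact Nat.cast_le.mp h2
    refine Finset.mem_biUnion.mpr ⟨k - 1, by simp only [Finset.mem_range]; omega, ?_⟩
    simp only [lev, Finset.mem_filter, Finset.mem_univ, true_and, ← hk]
    congr 1
    omega
  refine le_trans (le_trans (Finset.card_le_card hsub) Finset.card_biUnion_le) ?_
  refine Finset.sum_le_sum (fun i hi => ?_)
  have := lev_le hdeg v (i + 1) (by omega)
  simpa using this
end LevBounds

open MeasureTheory ENNReal Set SimpleGraph
set_option linter.unusedSectionVars false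
set_option linter.unusedVariables false
attribute [local instance] Classical.propDecidable

section DFS
variable {V : Type} [Fintype V] {D : ℕ}

structure DfsState (V : Type) where
  cur : V
  stk : List V
  vis : Finset V

/-- one decoding step -/
noncomputable def dstep (f : V → Fin D → V) (s : DfsState V) : Option (Fin D) → DfsState V
  | none => ⟨s.stk.headD s.cur, s.stk.tail, s.vis⟩
  | some j => ⟨f s.cur j, s.cur :: s.stk, insert (f s.cur j) s.vis⟩

noncomputable def drun (f : V → Fin D → V) (s : DfsState V) (w : List (Option (Fin D))) :
    DfsState V :=
  w.foldl (dstep f) s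

def downs (w : List (Option (Fin D))) : ℕ := (w.filter Option.isSome).length
def ups (w : List (Option (Fin D))) : ℕ := (w.filter Option.isNone).length

@[simp] lemma downs_nil : downs ([] : List (Option (Fin D))) = 0 := rfl
@[simp] lemma ups_nil : ups ([] : List (Option (Fin D))) = 0 := rfl
@[simp] lemma downs_cons_some (j : Fin D) (w : List (Option (Fin D))) :
    downs (some j :: w) = downs w + 1 := by simp [downs]
@[simp] lemma downs_cons_none (w : List (Option (Fin D))) :
    downs (none :: w) = downs w := by simp [downs]
@[simp] lemma ups_cons_some (j : Fin D) (w : List (Option (Fin D))) :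
    ups (some j :: w) = ups w := by simp [ups]
@[simp] lemma ups_cons_none (w : List (Option (Fin D))) :
    ups (none :: w) = ups w + 1 := by simp [ups]

lemma drun_nil (f : V → Fin D → V) (s : DfsState V) : drun f s [] = s := rfl

lemma drun_cons (f : V → Fin D → V) (s : DfsState V) (a : Option (Fin D))
    (w : List (Option (Fin D))) : drun f s (a :: w) = drun f (dstep f s a) w := rfl

lemma length_eq_downs_add_ups (w : List (Option (Fin D))) : w.length = downs w + ups w := by
  induction w with
  | nil => rfl
  | cons a w IH => cases a <;> simp <;> omega

lemma drun_append (f : V → Fin D → V) (s : DfsState V) (w r : List (Option (Fin D))) :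
    drun f s (w ++ r) = drun f (drun f s w) r := List.foldl_append ..

lemma dstep_none_vis (f : V → Fin D → V) (s : DfsState V) : (dstep f s none).vis = s.vis := rfl

lemma drun_replicate_none_vis (f : V → Fin D → V) (s : DfsState V) (k : ℕ) :
    (drun f s (List.replicate k none)).vis = s.vis := by
  induction k generalizing s with
  | zero => rfl
  | succ k IH => rw [List.replicate_succ, drun_cons, IH, dstep_none_vis]

lemma downs_append_replicate_none (w : List (Option (Fin D))) (k : ℕ) :
    downs (w ++ List.replicate k none) = downs w := by
  simp [downs, List.filter_append, List.filter_replicate]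

/-- The core DFS existence lemma. -/
lemma dfs_core (Hadj : V → V → Prop) (S : Finset V) (v : V)
    (f : V → Fin D → V) (hf : ∀ a b, a ∈ S → b ∈ S → Hadj a b → ∃ j, f a j = b)
    (hconn : ∀ s ∈ S, Relation.ReflTransGen (fun a b => a ∈ S ∧ b ∈ S ∧ Hadj a b) v s)
    (m : ℕ) (hmS : m ≤ S.card) :
    ∀ N : ℕ, ∀ s : DfsState V,
      s.cur ∈ s.vis → s.vis ⊆ S → (∀ x ∈ s.stk, x ∈ s.vis) → v ∈ s.vis →
      (∀ x ∈ s.vis, x ∉ s.stk → x ≠ s.cur → ∀ y ∈ S, Hadj x y → y ∈ s.vis) →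
      s.vis.card ≤ m → 2 * (S.card - s.vis.card) + s.stk.length ≤ N →
      ∃ w : List (Option (Fin D)),
        downs w = m - s.vis.card ∧ ups w ≤ downs w + s.stk.length ∧
        (drun f s w).vis.card = m ∧ s.vis ⊆ (drun f s w).vis ∧ (drun f s w).vis ⊆ S := by
  intro N
  induction N with
  | zero =>
    intro s hcur hvisS hstk hv hclosed hcard hN
    have hstk0 : s.stk = [] := List.length_eq_zero_iff.mp (by omega)
    by_cases hfull : s.vis.card = m
    · exact ⟨[], by simp [drun_nil, hfull], by simp, by simp [drun_nil, hfull],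
        by simp [drun_nil], by simpa [drun_nil] using hvisS⟩
    · exfalso
      have h1 : s.vis.card ≤ S.card := Finset.card_le_card hvisS
      omega
  | succ N IH =>
    intro s hcur hvisS hstk hv hclosed hcard hN
    by_cases hfull : s.vis.card = m
    · exact ⟨[], by simp [drun_nil, hfull], by simp, by simp [drun_nil, hfull],
        by simp [drun_nil], by simpa [drun_nil] using hvisS⟩
    have hlt : s.vis.card < m := lt_of_le_of_ne hcard hfull
    by_cases hfresh : ∃ y ∈ S, Hadj s.cur y ∧ y ∉ s.vis
    · -- push
      obtain ⟨y, hyS, hyadj, hynotvis⟩ := hfresh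
      obtain ⟨j, hj⟩ := hf s.cur y (hvisS hcur) hyS hyadj
      have hs'cur : (dstep f s (some j)).cur = y := by simp [dstep, hj]
      have hs'stk : (dstep f s (some j)).stk = s.cur :: s.stk := rfl
      have hs'vis : (dstep f s (some j)).vis = insert y s.vis := by simp [dstep, hj]
      have hcardins : (insert y s.vis).card = s.vis.card + 1 :=
        Finset.card_insert_of_notMem hynotvis
      have hSsub : s.vis.card < S.card := lt_of_lt_of_le hlt hmS
      obtain ⟨w', hd', hu', hfin', hsub', hS'⟩ := IH (dstep f s (some j))
        (by rw [hs'cur, hs'vis]; exact Finset.mem_insert_self _ _)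
        (by rw [hs'vis]; exact Finset.insert_subset hyS hvisS)
        (by rw [hs'stk, hs'vis]
            intro x hx
            rcases List.mem_cons.mp hx with rfl | hx
            · exact Finset.mem_insert_of_mem hcur
            · exact Finset.mem_insert_of_mem (hstk x hx))
        (by rw [hs'vis]; exact Finset.mem_insert_of_mem hv)
        (by rw [hs'cur, hs'stk, hs'vis]
            intro x hx hxstk hxcur y' hy'S hy'adj
            rcases Finset.mem_insert.mp hx with rfl | hx2
            · exact absurd rfl hxcur
            · have hxnotstk : x ∉ s.stk := fun h => hxstk (List.mem_cons_of_mem _ h)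
              have hxnotcur : x ≠ s.cur := fun h => hxstk (by rw [h]; exact List.mem_cons_self)
              exact Finset.mem_insert_of_mem (hclosed x hx2 hxnotstk hxnotcur y' hy'S hy'adj))
        (by rw [hs'vis]; omega)
        (by rw [hs'vis, hs'stk]
            simp only [List.length_cons]
            omega)
      rw [hs'vis] at hd' hsub'
      refine ⟨some j :: w', ?_, ?_, ?_, ?_, ?_⟩
      · simp only [downs_cons_some]
        omega
      · rw [hs'stk] at hu'
        simp only [ups_cons_some, downs_cons_some, List.length_cons] at hu' ⊢
        omega
      · rw [drun_cons]; exact hfin'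
      · rw [drun_cons]
        exact subset_trans (Finset.subset_insert _ _) (by rw [← hs'vis] at hsub'; exact hsub')
      · rw [drun_cons]; exact hS'
    · -- no fresh vertex
      push_neg at hfresh
      cases hstkc : s.stk with
      | nil =>
        exfalso
        have hcl : ∀ x ∈ s.vis, ∀ y ∈ S, Hadj x y → y ∈ s.vis := by
          intro x hx y hyS hxy
          by_cases hxc : x = s.cur
          · exact hfresh y hyS (hxc ▸ hxy)
          · exact hclosed x hx (by simp [hstkc]) hxc y hyS hxy
        have hSsub : ∀ z ∈ S, z ∈ s.vis := by
          intro z hz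
          have hrt := hconn z hz
          clear hz
          induction hrt with
          | refl => exact hv
          | tail hab hbc IH2 => exact hcl _ IH2 _ hbc.2.1 hbc.2.2
        have : S.card ≤ s.vis.card := Finset.card_le_card hSsub
        omega
      | cons p rest =>
        have hs'cur : (dstep f s none).cur = p := by simp [dstep, hstkc]
        have hs'stk : (dstep f s none).stk = rest := by simp [dstep, hstkc]
        have hs'vis : (dstep f s none).vis = s.vis := rfl
        have hlen : s.stk.length = rest.length + 1 := by rw [hstkc]; rfl
        obtain ⟨w', hd', hu', hfin', hsub', hS'⟩ := IH (dstep f s none)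
          (by rw [hs'cur, hs'vis]; exact hstk p (by simp [hstkc]))
          (by rw [hs'vis]; exact hvisS)
          (by rw [hs'stk, hs'vis]
              intro x hx
              exact hstk x (by simp [hstkc, List.mem_cons_of_mem, hx]))
          (by rw [hs'vis]; exact hv)
          (by rw [hs'cur, hs'stk, hs'vis]
              intro x hx hxstk hxcur y hyS hxy
              by_cases hxc : x = s.cur
              · exact hfresh y hyS (hxc ▸ hxy)
              · refine hclosed x hx ?_ hxc y hyS hxy
                simp only [hstkc, List.mem_cons]
                push_neg
                exact ⟨fun h => hxcur h, hxstk⟩)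
          (by rw [hs'vis]; exact hcard)
          (by rw [hs'vis, hs'stk]; omega)
        rw [hs'vis] at hd' hsub'
        rw [hs'stk] at hu'
        refine ⟨none :: w', ?_, ?_, ?_, ?_, ?_⟩
        · simpa using hd'
        · simp only [ups_cons_none, downs_cons_none]
          have hc : (p :: rest).length = rest.length + 1 := rfl
          omega
        · rw [drun_cons]; exact hfin'
        · rw [drun_cons]; exact hsub'
        · rw [drun_cons]; exact hS'

end DFS

section Count
attribute [local instance] Classical.propDecidable

lemma card_words_le (L d D : ℕ) (hD : 0 < D) :
    (Finset.univ.filter (fun w : Fin L → Option (Fin D) =>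
      (Finset.univ.filter (fun i => (w i).isSome)).card = d)).card
      ≤ Nat.choose L d * D ^ d := by
  classical
  set F := Finset.univ.filter (fun w : Fin L → Option (Fin D) =>
      (Finset.univ.filter (fun i => (w i).isSome)).card = d) with hF
  have hsub : F ⊆ (Finset.univ.powersetCard d).biUnion
      (fun s => Finset.univ.filter
        (fun w : Fin L → Option (Fin D) => Finset.univ.filter (fun i => (w i).isSome) = s)) := by
    intro w hw
    simp only [hF, Finset.mem_filter, Finset.mem_univ, true_and] at hw
    refine Finset.mem_biUnion.mpr ⟨Finset.univ.filter (fun i => (w i).isSome), ?_, ?_⟩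
    · exact Finset.mem_powersetCard.mpr ⟨Finset.subset_univ _, hw⟩
    · simp
  refine le_trans (le_trans (Finset.card_le_card hsub) Finset.card_biUnion_le) ?_
  have hcard : (Finset.univ.powersetCard d : Finset (Finset (Fin L))).card
      = Nat.choose L d := by
    rw [Finset.card_powersetCard]
    simp
  rw [← hcard]
  refine le_trans (Finset.sum_le_card_nsmul _ _ (D ^ d) (fun s hs => ?_))
    (le_of_eq (smul_eq_mul ..))
  have hsd : s.card = d := (Finset.mem_powersetCard.mp hs).2
  calc (Finset.univ.filter
      (fun w : Fin L → Option (Fin D) => Finset.univ.filter (fun i => (w i).isSome) = s)).card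
      ≤ Fintype.card ({i : Fin L // i ∈ s} → Fin D) := by
        apply Finset.card_le_card_of_injOn
          (fun w (i : {i : Fin L // i ∈ s}) => (w i.1).getD ⟨0, hD⟩)
        · intro w hw
          exact Finset.mem_univ _
        · intro w hw w' hw' heq
          simp only [Finset.coe_filter, Finset.mem_univ, true_and, Set.mem_setOf_eq] at hw hw'
          have hws : ∀ i ∈ s, (w i).isSome := by
            intro i hi
            rw [← hw] at hi
            exact (Finset.mem_filter.mp hi).2
          have hw's : ∀ i ∈ s, (w' i).isSome := by
            intro i hi
            rw [← hw'] at hi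
            exact (Finset.mem_filter.mp hi).2
          funext i
          by_cases his : i ∈ s
          · obtain ⟨a, ha⟩ := Option.isSome_iff_exists.mp (hws i his)
            obtain ⟨b, hb⟩ := Option.isSome_iff_exists.mp (hw's i his)
            have e1 := congrFun heq ⟨i, his⟩
            simp only [ha, hb, Option.getD_some] at e1
            rw [ha, hb, e1]
          · have h1 : w i = none := by
              rw [← Option.not_isSome_iff_eq_none]
              intro h
              exact his (hw ▸ Finset.mem_filter.mpr ⟨Finset.mem_univ _, h⟩)
            have h2 : w' i = none := by
              rw [← Option.not_isSome_iff_eq_none]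
              intro h
              exact his (hw' ▸ Finset.mem_filter.mpr ⟨Finset.mem_univ _, h⟩)
            rw [h1, h2]
    _ = D ^ d := by
        rw [Fintype.card_fun, Fintype.card_fin]
        congr 1
        rw [Fintype.card_coe, hsd]
end Count

open Finset

lemma geom_sum_le_tp (q r : ℕ) (hq : 2 ≤ q) (hr : 1 ≤ r) :
    ∑ i ∈ Finset.range r, q ^ i ≤ 2 * q ^ (r - 1) := by
  induction r with
  | zero => omega
  | succ r IH =>
    rcases Nat.eq_or_lt_of_le hr with h1 | h1
    · simp [← h1]
    · have hr1 : 1 ≤ r := by omega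
      rw [Finset.sum_range_succ]
      have h2 : q ^ r = q * q ^ (r - 1) := by
        conv_lhs => rw [show r = (r - 1) + 1 by omega]
        rw [pow_succ]
        ring
      calc ∑ i ∈ Finset.range r, q ^ i + q ^ r ≤ 2 * q ^ (r - 1) + q ^ r := by
            have := IH hr1; omega
        _ ≤ q * q ^ (r - 1) + q ^ r := by
            have : 2 * q ^ (r-1) ≤ q * q ^ (r-1) := Nat.mul_le_mul_right _ hq
            omega
        _ = 2 * q ^ r := by rw [h2]; ring
        _ = 2 * q ^ (r + 1 - 1) := by norm_num

lemma lin_lt_two_pow (c : ℕ) (hc : 1 ≤ c) : 4 * c + 1 < 2 ^ (4 * c) := by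
  induction c with
  | zero => omega
  | succ c IH =>
    rcases Nat.eq_or_lt_of_le hc with h1 | h1
    · simp [← h1]
    · have h2 := IH (by omega)
      have h3 : (2:ℕ) ^ (4 * c) ≥ 1 := Nat.one_le_two_pow
      calc 4 * (c + 1) + 1 = (4 * c + 1) + 4 := by ring
        _ < 2 ^ (4 * c) + 4 := by omega
        _ ≤ 2 ^ (4 * c) * 16 := by nlinarith
        _ = 2 ^ (4 * (c + 1)) := by rw [show 4 * (c+1) = 4*c + 4 by ring, pow_add]; norm_num

lemma numer_main (Δ c₂ : ℕ) (hΔ : 2 ≤ Δ) (hc₂ : 1 ≤ c₂) :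
    4 * (∑ i ∈ Finset.range (4 * c₂ + 1), Δ * (Δ - 1) ^ i) < Δ ^ (4 * c₂ + 3) := by
  rcases Nat.eq_or_lt_of_le hΔ with h2 | h3
  · -- Δ = 2
    subst h2
    simp only [show (2:ℕ) - 1 = 1 from rfl, one_pow, mul_one, Finset.sum_const,
      Finset.card_range, smul_eq_mul]
    have := lin_lt_two_pow c₂ hc₂
    have h8 : (2:ℕ)^(4*c₂+3) = 8 * 2^(4*c₂) := by rw [pow_add]; ring
    omega
  · -- Δ ≥ 3
    have hΔ3 : 3 ≤ Δ := h3
    have hgeom := geom_sum_le_tp (Δ - 1) (4 * c₂ + 1) (by omega) (by omega)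
    have hfac : ∑ i ∈ Finset.range (4 * c₂ + 1), Δ * (Δ - 1) ^ i
        = Δ * ∑ i ∈ Finset.range (4 * c₂ + 1), (Δ - 1) ^ i := by
      rw [Finset.mul_sum]
    rw [hfac]
    have hle : (Δ - 1) ^ (4 * c₂ + 1 - 1) ≤ Δ ^ (4 * c₂) := by
      have : 4 * c₂ + 1 - 1 = 4 * c₂ := by omega
      rw [this]
      exact Nat.pow_le_pow_left (by omega) _
    calc 4 * (Δ * ∑ i ∈ Finset.range (4 * c₂ + 1), (Δ - 1) ^ i)
        ≤ 4 * (Δ * (2 * (Δ - 1) ^ (4 * c₂ + 1 - 1))) := by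
          exact Nat.mul_le_mul_left _ (Nat.mul_le_mul_left _ hgeom)
      _ = 8 * Δ * (Δ - 1) ^ (4 * c₂ + 1 - 1) := by ring
      _ ≤ 8 * Δ * Δ ^ (4 * c₂) := Nat.mul_le_mul_left _ hle
      _ < 9 * Δ * Δ ^ (4 * c₂) := by
          have hpos : 0 < Δ * Δ ^ (4 * c₂) := Nat.mul_pos (by omega) (Nat.pow_pos (by omega))
          nlinarith
      _ ≤ Δ * Δ * (Δ * Δ ^ (4 * c₂)) := by
          have h9 : 9 ≤ Δ * Δ := by nlinarith
          calc 9 * Δ * Δ ^ (4 * c₂) = 9 * (Δ * Δ ^ (4 * c₂)) := by ring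
            _ ≤ (Δ * Δ) * (Δ * Δ ^ (4 * c₂)) := Nat.mul_le_mul_right _ h9
            _ = Δ * Δ * (Δ * Δ ^ (4 * c₂)) := rfl
      _ = Δ ^ (4 * c₂ + 3) := by
          rw [show 4*c₂+3 = (4*c₂) + 1 + 1 + 1 by ring]
          rw [pow_succ, pow_succ, pow_succ]
          ring

lemma choose_le_two_pow' (n k : ℕ) (h : k ≤ n) : n.choose k ≤ 2 ^ n := by
  calc n.choose k ≤ ∑ i ∈ Finset.range (n + 1), n.choose i :=
        Finset.single_le_sum (fun i _ => Nat.zero_le _) (Finset.mem_range.mpr (by omega))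
    _ = 2 ^ n := Nat.sum_range_choose n

section Blocks
variable {V : Type} [Fintype V] (G : SimpleGraph V) (c₂ : ℕ)

def blockT (v : V) : Set V := {u | G.Reachable v u ∧ G.dist v u ≤ c₂}

lemma mem_blockT_iff (v u : V) : u ∈ blockT G c₂ v ↔ G.edist v u ≤ (c₂ : ℕ∞) := by
  constructor
  · rintro ⟨hr, hd⟩
    have hne : G.edist v u ≠ ⊤ := SimpleGraph.edist_ne_top_iff_reachable.mpr hr
    rw [show G.edist v u = ((G.dist v u : ℕ) : ℕ∞) from (ENat.coe_toNat hne).symm]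
    exact_mod_cast hd
  · intro h
    have hne : G.edist v u ≠ ⊤ := ne_top_of_le_ne_top (ENat.coe_ne_top c₂) h
    refine ⟨SimpleGraph.reachable_of_edist_ne_top hne, ?_⟩
    have := ENat.coe_toNat hne
    rw [← this] at h
    exact_mod_cast h

lemma blockT_disjoint (u₁ u₂ : V) (h : ((2 * c₂ + 1 : ℕ) : ℕ∞) ≤ G.edist u₁ u₂) :
    Disjoint (blockT G c₂ u₁) (blockT G c₂ u₂) := by
  rw [Set.disjoint_left]
  intro x hx1 hx2
  rw [mem_blockT_iff] at hx1 hx2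
  have htri : G.edist u₁ u₂ ≤ G.edist u₁ x + G.edist x u₂ := SimpleGraph.edist_triangle
  rw [show G.edist x u₂ = G.edist u₂ x from SimpleGraph.edist_comm] at htri
  have : G.edist u₁ u₂ ≤ ((2 * c₂ : ℕ) : ℕ∞) := by
    refine le_trans htri (le_trans (add_le_add hx1 hx2) ?_)
    rw [show ((2 * c₂ : ℕ) : ℕ∞) = (c₂ : ℕ∞) + (c₂ : ℕ∞) by push_cast; ring]
  have h2 := le_trans h this
  have := Nat.cast_le (α := ℕ∞) |>.mp h2
  omega
end Blocks

lemma downs_ofFn {D : ℕ} : ∀ (L : ℕ) (g : Fin L → Option (Fin D)),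
    downs (List.ofFn g) = (Finset.univ.filter (fun i => (g i).isSome)).card := by
  intro L
  induction L with
  | zero => intro g; simp [downs]
  | succ L IH =>
    intro g
    rw [List.ofFn_succ, Finset.card_filter, Fin.sum_univ_succ, ← Finset.card_filter]
    cases hg : g 0 with
    | none => simp [hg, IH (fun i => g i.succ)]
    | some j => simp [hg, IH (fun i => g i.succ)]; omega
set_option maxHeartbeats 2000000 in
/-- **The Shattering Lemma.**  Let `Δ ≥ 2`, `c₁, c₂ ≥ 1` be integers and `c₃ > 0` a
real with `c₃ < c₁ - 4c₂ - 2`.  Then there is a constant `C` such that for all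
sufficiently large `n` the following holds.  Let `G` be a graph on `n` vertices with
maximum degree at most `Δ`, let `Ω = ∏ᵥ Ωᵥ` be a product of probability spaces, and
let `B : Ω → Set V` be a random subset of the vertices such that for every vertex
`v`, the event `{v ∈ B}` is measurable with respect to the coordinates at graph
distance at most `c₂` from `v` and has probability at most `Δ^{-c₁}`.  Then with
probability at least `1 - n^{-c₃}`, every connected component of the subgraph of `G`
induced by `B` has at most `C log n` vertices. -/
theorem stmt10 (Δ c₁ c₂ : ℕ) (hΔ : 2 ≤ Δ) (hc₁ : 1 ≤ c₁) (hc₂ : 1 ≤ c₂)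
    (c₃ : ℝ) (hc₃pos : 0 < c₃) (hc₃lt : c₃ < (c₁ : ℝ) - 4 * c₂ - 2) :
    ∃ C : ℝ, ∃ n₀ : ℕ, ∀ n : ℕ, n₀ ≤ n →
      ∀ (V : Type) [Fintype V], Fintype.card V = n →
      ∀ (G : SimpleGraph V), (∀ v : V, (G.neighborSet v).ncard ≤ Δ) →
      ∀ (Ω : V → Type) [∀ v, MeasurableSpace (Ω v)]
        (μ : ∀ v, Measure (Ω v)) [∀ v, IsProbabilityMeasure (μ v)]
        (B : (∀ v, Ω v) → Set V),
        (∀ v : V, MeasurableSet[MeasurableSpace.comap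
            (fun (ω : ∀ u, Ω u) (u : {u : V // G.Reachable v u ∧ G.dist v u ≤ c₂}) =>
              ω u.1)
            inferInstance] {ω | v ∈ B ω}) →
        (∀ v : V, Measure.pi μ {ω | v ∈ B ω} ≤ ((Δ : ℝ≥0∞) ^ c₁)⁻¹) →
        1 - ENNReal.ofReal ((n : ℝ) ^ (-c₃)) ≤
          Measure.pi μ
            {ω | ∀ (v : V) (hv : v ∈ B ω),
              (({u : V | ∃ hu : u ∈ B ω,
                  (G.induce (B ω)).Reachable ⟨v, hv⟩ ⟨u, hu⟩}).ncard : ℝ)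
                ≤ C * Real.log n} := by
  classical
  have hc₁big : 4 * c₂ + 3 ≤ c₁ := by
    have h2 : ((4 * c₂ + 2 : ℕ) : ℝ) < (c₁ : ℝ) := by push_cast; linarith
    have := Nat.cast_lt.mp h2
    omega
  set Dbig := ∑ i ∈ Finset.range (4 * c₂ + 1), Δ * (Δ - 1) ^ i with hDbig
  set Bs := 1 + ∑ i ∈ Finset.range (2 * c₂), Δ * (Δ - 1) ^ i with hBsdef
  have hDpos : 0 < Dbig := by
    rw [hDbig]
    refine Finset.sum_pos' (fun i _ => Nat.zero_le _)
      ⟨0, Finset.mem_range.mpr (by omega), by simpa using (by omega : 0 < Δ)⟩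
  have hBpos : 0 < Bs := by omega
  have hnum : 4 * Dbig < Δ ^ c₁ :=
    lt_of_lt_of_le (numer_main Δ c₂ hΔ hc₂) (Nat.pow_le_pow_right (by omega) hc₁big)
  set q : ℝ := ((Δ ^ c₁ : ℕ) : ℝ) / ((4 * Dbig : ℕ) : ℝ) with hq
  have h4Dpos : (0:ℝ) < ((4 * Dbig : ℕ) : ℝ) := by positivity
  have hqgt1 : 1 < q := by
    rw [hq, lt_div_iff₀ h4Dpos, one_mul]
    exact_mod_cast hnum
  set Lq := Real.log q with hLq
  have hLqpos : 0 < Lq := Real.log_pos hqgt1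
  refine ⟨(Bs : ℝ) * ((1 + c₃) / Lq + 2), 3, ?_⟩
  intro n hn V _ hcardV G hdeg Ω _ μ _ B hmeas hp
  have hn3 : (3 : ℝ) ≤ (n : ℝ) := by exact_mod_cast hn
  have hnpos : (0 : ℝ) < n := by linarith
  have hlogn : 1 ≤ Real.log n := by
    rw [← Real.log_exp 1]
    refine Real.log_le_log (Real.exp_pos 1) ?_
    calc Real.exp 1 ≤ 2.7182818286 := Real.exp_one_lt_d9.le
      _ ≤ 3 := by norm_num
      _ ≤ n := hn3
  set m := ⌈(1 + c₃) * Real.log n / Lq⌉₊ with hm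
  have hargpos : 0 < (1 + c₃) * Real.log n / Lq := by positivity
  have hm1 : 1 ≤ m := Nat.one_le_iff_ne_zero.mpr (by
    rw [hm]
    exact Nat.pos_iff_ne_zero.mp (Nat.ceil_pos.mpr hargpos))
  have hmreal : (1 + c₃) * Real.log n / Lq ≤ (m : ℝ) := Nat.le_ceil _
  have hmub : (m : ℝ) < (1 + c₃) * Real.log n / Lq + 1 := Nat.ceil_lt_add_one hargpos.le
  set L := 2 * (m - 1) with hLdef
  have hdegF : ∀ v : V, (G.neighborFinset v).card ≤ Δ := by
    intro v
    rw [SimpleGraph.neighborFinset_def]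
    rw [← Set.ncard_eq_toFinset_card']
    exact hdeg v
  set Hadj : V → V → Prop := fun a b => a ≠ b ∧ G.edist a b ≤ ((4 * c₂ + 1 : ℕ) : ℕ∞)
    with hHadjdef
  have hHnb : ∀ a : V, (Finset.univ.filter (fun b => Hadj a b)).card ≤ Dbig := by
    intro a
    refine le_trans (Finset.card_le_card ?_) (ballAnn_card_le hdegF a (4 * c₂ + 1))
    intro b hb
    simp only [Finset.mem_filter, Finset.mem_univ, true_and, hHadjdef] at hb
    simp only [ballAnn, Finset.mem_filter, Finset.mem_univ, true_and]
    refine ⟨?_, hb.2⟩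
    rw [ne_eq, SimpleGraph.edist_eq_zero_iff]
    exact hb.1
  set f : V → Fin Dbig → V :=
    fun a j => ((Finset.univ.filter (fun b => Hadj a b)).toList).getD j a with hfdef
  have hf : ∀ a b : V, Hadj a b → ∃ j : Fin Dbig, f a j = b := by
    intro a b hab
    have hmem : b ∈ (Finset.univ.filter (fun b => Hadj a b)).toList := by
      rw [Finset.mem_toList]
      simpa using hab
    obtain ⟨⟨i, hi⟩, hget⟩ := List.mem_iff_get.mp hmem
    have hilt : i < Dbig := lt_of_lt_of_le (by
      rw [← Finset.length_toList]
      exact hi) (hHnb a)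
    refine ⟨⟨i, hilt⟩, ?_⟩
    rw [hfdef]
    simp only
    rw [List.getD_eq_getElem _ _ hi]
    rw [← hget]
    rfl
  set vis : V → (Fin L → Option (Fin Dbig)) → Finset V :=
    fun v w => (drun f ⟨v, [], {v}⟩ (List.ofFn w)).vis with hvisdef
  set GoodW : V → Finset (Fin L → Option (Fin Dbig)) :=
    fun v => Finset.univ.filter (fun w =>
      (Finset.univ.filter (fun i => (w i).isSome)).card = m - 1 ∧
      (vis v w).card = m ∧ v ∈ vis v w ∧
      ∀ a ∈ vis v w, ∀ b ∈ vis v w, a ≠ b → ((2 * c₂ + 1 : ℕ) : ℕ∞) ≤ G.edist a b)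
    with hGoodWdef
  set Ev : V → (Fin L → Option (Fin Dbig)) → Set (∀ v, Ω v) :=
    fun v w => ⋂ u ∈ vis v w, {ω | u ∈ B ω} with hEvdef
  set p : ℝ≥0∞ := ((Δ : ℝ≥0∞) ^ c₁)⁻¹ with hpdef
  -- measure bound for each event
  have hchoice : ∀ u : V, ∃ E : Set (∀ x : ↥(blockT G c₂ u), Ω x.1),
      MeasurableSet E ∧ restr (blockT G c₂ u) ⁻¹' E = {ω | u ∈ B ω} := by
    intro u
    obtain ⟨E, hE1, hE2⟩ := MeasurableSpace.measurableSet_comap.mp (hmeas u)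
    exact ⟨E, hE1, hE2⟩
  have hEv : ∀ v : V, ∀ w ∈ GoodW v, Measure.pi μ (Ev v w) ≤ p ^ m := by
    intro v w hw
    simp only [hGoodWdef, Finset.mem_filter, Finset.mem_univ, true_and] at hw
    obtain ⟨hdowns, hcardm, hvmem, hsep⟩ := hw
    choose Efun hEfun using hchoice
    have hdisj : ∀ a ∈ vis v w, ∀ b ∈ vis v w, a ≠ b →
        Disjoint (blockT G c₂ a) (blockT G c₂ b) :=
      fun a ha b hb hne => blockT_disjoint G c₂ a b (hsep a ha b hb hne)
    have hEq : Ev v w = ⋂ u ∈ vis v w, restr (blockT G c₂ u) ⁻¹' (Efun u) := by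
      rw [hEvdef]
      exact Set.iInter₂_congr (fun u hu => ((hEfun u).2).symm)
    rw [hEq, indep_blocks μ (blockT G c₂) Efun (fun u => (hEfun u).1) (vis v w) hdisj]
    have hprodle : ∏ u ∈ vis v w, Measure.pi μ (restr (blockT G c₂ u) ⁻¹' (Efun u))
        ≤ ∏ _u ∈ vis v w, p := by
      refine Finset.prod_le_prod' (fun u hu => ?_)
      rw [(hEfun u).2, hpdef]
      exact hp u
    refine le_trans hprodle ?_
    rw [Finset.prod_const, hcardm]
  -- covering of the bad set
  have hcover : {ω : ∀ v, Ω v | ∀ (v : V) (hv : v ∈ B ω),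
      (({u : V | ∃ hu : u ∈ B ω,
          (G.induce (B ω)).Reachable ⟨v, hv⟩ ⟨u, hu⟩}).ncard : ℝ)
        ≤ (Bs : ℝ) * ((1 + c₃) / Lq + 2) * Real.log n}ᶜ
      ⊆ ⋃ v : V, ⋃ w ∈ GoodW v, Ev v w := by
    intro ω hω
    simp only [Set.mem_compl_iff, Set.mem_setOf_eq] at hω
    push_neg at hω
    obtain ⟨v, hv, hKbig⟩ := hω
    set K : Set V := {u : V | ∃ hu : u ∈ B ω, (G.induce (B ω)).Reachable ⟨v, hv⟩ ⟨u, hu⟩}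
      with hKdef
    set KF : Finset V := K.toFinset with hKFdef
    have hKcard : (Bs : ℝ) * ((1 + c₃) / Lq + 2) * Real.log n < (KF.card : ℝ) := by
      rw [hKFdef, ← Set.ncard_eq_toFinset_card']
      exact hKbig
    have hvK : v ∈ KF := by
      rw [hKFdef, Set.mem_toFinset]
      exact ⟨hv, SimpleGraph.Reachable.refl _⟩
    have hKB : ∀ u ∈ KF, u ∈ B ω := by
      intro u hu
      rw [hKFdef, Set.mem_toFinset] at hu
      exact hu.choose
    have hC1 : ∀ y : ↥(B ω), Relation.ReflTransGen (G.induce (B ω)).Adj ⟨v, hv⟩ y →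
        y.1 ∈ KF := by
      intro y hy
      rw [hKFdef, Set.mem_toFinset]
      obtain ⟨y1, y2⟩ := y
      exact ⟨y2, (SimpleGraph.reachable_iff_reflTransGen _ _).mpr hy⟩
    -- maximal separated subset
    have hPne : ({v} : Finset V) ∈ Finset.univ.filter (fun S : Finset V => S ⊆ KF ∧ v ∈ S ∧
        ∀ a ∈ S, ∀ b ∈ S, a ≠ b → ((2 * c₂ + 1 : ℕ) : ℕ∞) ≤ G.edist a b) := by
      simp only [Finset.mem_filter, Finset.mem_univ, true_and]
      refine ⟨Finset.singleton_subset_iff.mpr hvK, Finset.mem_singleton_self v, ?_⟩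
      intro a ha b hb hab
      rw [Finset.mem_singleton] at ha hb
      exact absurd (ha.trans hb.symm) hab
    obtain ⟨S, hSmem, hSmax⟩ := Finset.exists_max_image
      (Finset.univ.filter (fun S : Finset V => S ⊆ KF ∧ v ∈ S ∧
        ∀ a ∈ S, ∀ b ∈ S, a ≠ b → ((2 * c₂ + 1 : ℕ) : ℕ∞) ≤ G.edist a b))
      Finset.card ⟨_, hPne⟩
    obtain ⟨hSsub, hvS, hSsep⟩ := (Finset.mem_filter.mp hSmem).2
    -- covering property
    have hcov : ∀ x ∈ KF, ∃ s ∈ S, G.edist s x ≤ ((2 * c₂ : ℕ) : ℕ∞) := by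
      intro x hx
      by_contra hno
      push_neg at hno
      have hxS : x ∉ S := by
        intro hxs
        have h0 := hno x hxs
        rw [SimpleGraph.edist_self] at h0
        simp at h0
      have hsepx : ∀ s ∈ S, ((2 * c₂ + 1 : ℕ) : ℕ∞) ≤ G.edist s x := by
        intro s hs
        have h2 : ((2 * c₂ : ℕ) : ℕ∞) + 1 ≤ G.edist s x := Order.add_one_le_of_lt (hno s hs)
        calc ((2 * c₂ + 1 : ℕ) : ℕ∞) = ((2 * c₂ : ℕ) : ℕ∞) + 1 := by push_cast; ring
          _ ≤ G.edist s x := h2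
      have hins : insert x S ∈ Finset.univ.filter (fun S : Finset V => S ⊆ KF ∧ v ∈ S ∧
          ∀ a ∈ S, ∀ b ∈ S, a ≠ b → ((2 * c₂ + 1 : ℕ) : ℕ∞) ≤ G.edist a b) := by
        simp only [Finset.mem_filter, Finset.mem_univ, true_and]
        refine ⟨Finset.insert_subset hx hSsub, Finset.mem_insert_of_mem hvS, ?_⟩
        intro a ha b hb hab
        rcases Finset.mem_insert.mp ha with rfl | haS
        · rcases Finset.mem_insert.mp hb with rfl | hbS
          · exact absurd rfl hab
          · rw [SimpleGraph.edist_comm]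
            exact hsepx b hbS
        · rcases Finset.mem_insert.mp hb with rfl | hbS
          · exact hsepx a haS
          · exact hSsep a haS b hbS hab
      have hcontra := hSmax _ hins
      rw [Finset.card_insert_of_notMem hxS] at hcontra
      omega
    -- cardinality lower bound for S
    have hballcard : ∀ s : V,
        (Finset.univ.filter (fun x => G.edist s x ≤ ((2 * c₂ : ℕ) : ℕ∞))).card ≤ Bs := by
      intro s
      have hsub : Finset.univ.filter (fun x => G.edist s x ≤ ((2 * c₂ : ℕ) : ℕ∞))
          ⊆ insert s (ballAnn G s (2 * c₂)) := by
        intro x hx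
        simp only [Finset.mem_filter, Finset.mem_univ, true_and] at hx
        by_cases hxs : x = s
        · exact hxs ▸ Finset.mem_insert_self _ _
        · refine Finset.mem_insert_of_mem ?_
          simp only [ballAnn, Finset.mem_filter, Finset.mem_univ, true_and]
          refine ⟨?_, hx⟩
          rw [ne_eq, SimpleGraph.edist_eq_zero_iff]
          exact fun h => hxs h.symm
      refine le_trans (Finset.card_le_card hsub) (le_trans (Finset.card_insert_le _ _) ?_)
      have := ballAnn_card_le hdegF s (2 * c₂)
      rw [hBsdef]
      omega
    have hcardSB : KF.card ≤ S.card * Bs := by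
      have hsub : KF ⊆ S.biUnion
          (fun s => Finset.univ.filter (fun x => G.edist s x ≤ ((2 * c₂ : ℕ) : ℕ∞))) := by
        intro x hx
        obtain ⟨s, hs, hsx⟩ := hcov x hx
        refine Finset.mem_biUnion.mpr ⟨s, hs, ?_⟩
        simp only [Finset.mem_filter, Finset.mem_univ, true_and]
        exact hsx
      refine le_trans (Finset.card_le_card hsub) (le_trans Finset.card_biUnion_le ?_)
      refine le_trans (Finset.sum_le_card_nsmul _ _ Bs (fun s _ => hballcard s)) ?_
      rw [smul_eq_mul]
    have hmS : m ≤ S.card := by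
      have h1 : (KF.card : ℝ) ≤ (S.card : ℝ) * (Bs : ℝ) := by exact_mod_cast hcardSB
      have hBpos' : (0 : ℝ) < (Bs : ℝ) := by exact_mod_cast hBpos
      have h2 : ((1 + c₃) / Lq + 2) * Real.log n < (S.card : ℝ) := by
        rw [← mul_lt_mul_iff_of_pos_right hBpos']
        calc ((1 + c₃) / Lq + 2) * Real.log n * (Bs : ℝ)
            = (Bs : ℝ) * ((1 + c₃) / Lq + 2) * Real.log n := by ring
          _ < (KF.card : ℝ) := hKcard
          _ ≤ (S.card : ℝ) * (Bs : ℝ) := h1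
      have h3 : (m : ℝ) < (S.card : ℝ) := by
        have e1 : ((1 + c₃) / Lq + 2) * Real.log n
            = (1 + c₃) * Real.log n / Lq + 2 * Real.log n := by ring
        nlinarith [hmub, hlogn]
      exact le_of_lt (Nat.cast_lt.mp h3)
    -- H-connectivity of S
    have hC3 : ∀ y : ↥(B ω), Relation.ReflTransGen (G.induce (B ω)).Adj ⟨v, hv⟩ y →
        ∀ s ∈ S, G.edist s y.1 ≤ ((2 * c₂ : ℕ) : ℕ∞) →
        Relation.ReflTransGen (fun a b => a ∈ S ∧ b ∈ S ∧ Hadj a b) v s := by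
      intro y hy
      induction hy with
      | refl =>
        intro s hs hcovs
        by_cases hsv : s = v
        · exact hsv ▸ Relation.ReflTransGen.refl
        · refine Relation.ReflTransGen.single ⟨hvS, hs, ?_, ?_⟩
          · exact fun h => hsv h.symm
          · rw [SimpleGraph.edist_comm] at hcovs
            refine le_trans hcovs ?_
            exact_mod_cast Nat.cast_le.mpr (by omega : 2 * c₂ ≤ 4 * c₂ + 1)
      | @tail b c hpath hadj IH =>
        intro s hs hcovs
        have hbK : b.1 ∈ KF := hC1 b hpath
        obtain ⟨sb, hsb, hsbcov⟩ := hcov b.1 hbK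
        have hchain := IH sb hsb hsbcov
        by_cases hsbs : sb = s
        · exact hsbs ▸ hchain
        · refine hchain.tail ⟨hsb, hs, hsbs, ?_⟩
          have hGadj : G.Adj b.1 c.1 := hadj
          have he1 : G.edist b.1 c.1 ≤ 1 := le_of_eq (SimpleGraph.edist_eq_one_iff_adj.mpr hGadj)
          have htr1 : G.edist sb s ≤ G.edist sb b.1 + G.edist b.1 s := SimpleGraph.edist_triangle
          have htr2 : G.edist b.1 s ≤ G.edist b.1 c.1 + G.edist c.1 s := SimpleGraph.edist_triangle
          have hcs : G.edist c.1 s ≤ ((2 * c₂ : ℕ) : ℕ∞) := by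
            rw [SimpleGraph.edist_comm]
            exact hcovs
          calc G.edist sb s ≤ G.edist sb b.1 + (G.edist b.1 c.1 + G.edist c.1 s) :=
                le_trans htr1 (add_le_add le_rfl htr2)
            _ ≤ ((2 * c₂ : ℕ) : ℕ∞) + (1 + ((2 * c₂ : ℕ) : ℕ∞)) :=
                add_le_add hsbcov (add_le_add he1 hcs)
            _ = ((4 * c₂ + 1 : ℕ) : ℕ∞) := by push_cast; ring
    have hconn : ∀ s ∈ S,
        Relation.ReflTransGen (fun a b => a ∈ S ∧ b ∈ S ∧ Hadj a b) v s := by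
      intro s hs
      have hsK : s ∈ KF := hSsub hs
      rw [hKFdef, Set.mem_toFinset] at hsK
      obtain ⟨hsB, hreach⟩ := hsK
      refine hC3 ⟨s, hsB⟩ ((SimpleGraph.reachable_iff_reflTransGen _ _).mp hreach) s hs ?_
      rw [SimpleGraph.edist_self]
      exact zero_le
    -- run the DFS
    have hfS : ∀ a b : V, a ∈ S → b ∈ S → Hadj a b → ∃ j, f a j = b :=
      fun a b _ _ hab => hf a b hab
    obtain ⟨wlist, hwd, hwu, hwcard, hwsub0, hwS⟩ :=
      dfs_core Hadj S v f hfS hconn m hmS (2 * S.card) ⟨v, [], {v}⟩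
        (Finset.mem_singleton_self v)
        (Finset.singleton_subset_iff.mpr hvS)
        (by intro x hx; simp at hx)
        (Finset.mem_singleton_self v)
        (by intro x hx hx1 hx2
            rw [Finset.mem_singleton] at hx
            exact absurd hx hx2)
        (by rw [Finset.card_singleton]; exact hm1)
        (by rw [Finset.card_singleton]
            simp only [List.length_nil]
            omega)
    rw [Finset.card_singleton] at hwd
    have hwlen : wlist.length ≤ L := by
      rw [length_eq_downs_add_ups, hLdef]
      have : ups wlist ≤ downs wlist := by simpa using hwu
      omega
    set wl := wlist ++ List.replicate (L - wlist.length) none with hwldef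
    have hwllen : wl.length = L := by
      rw [hwldef, List.length_append, List.length_replicate]
      omega
    have hwldowns : downs wl = m - 1 := by
      rw [hwldef, downs_append_replicate_none, hwd]
    have hwlvis : (drun f ⟨v, [], {v}⟩ wl).vis = (drun f ⟨v, [], {v}⟩ wlist).vis := by
      rw [hwldef, drun_append, drun_replicate_none_vis]
    set wfun : Fin L → Option (Fin Dbig) := fun i => wl.get (Fin.cast hwllen.symm i)
      with hwfundef
    have hofn : List.ofFn wfun = wl := by
      refine List.ext_getElem (by simp [hwllen]) ?_
      intro i h1 h2
      simp [hwfundef, List.getElem_ofFn]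
    have hvisw : vis v wfun = (drun f ⟨v, [], {v}⟩ wlist).vis := by
      rw [hvisdef]
      simp only
      rw [hofn, hwlvis]
    have hGoodmem : wfun ∈ GoodW v := by
      rw [hGoodWdef]
      simp only [Finset.mem_filter, Finset.mem_univ, true_and]
      refine ⟨?_, ?_, ?_, ?_⟩
      · rw [← downs_ofFn, hofn, hwldowns]
      · rw [hvisw]; exact hwcard
      · rw [hvisw]; exact hwsub0 (Finset.mem_singleton_self v)
      · intro a ha b hb hab
        rw [hvisw] at ha hb
        exact hSsep a (hwS ha) b (hwS hb) hab
    refine Set.mem_iUnion.mpr ⟨v, ?_⟩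
    refine Set.mem_biUnion hGoodmem ?_
    rw [hEvdef]
    simp only [Set.mem_iInter, Set.mem_setOf_eq]
    intro u hu
    rw [hvisw] at hu
    exact hKB u (hSsub (hwS hu))
  -- arithmetic: total union bound ≤ n^{-c₃}
  have harith : (n : ℝ≥0∞) * ((Nat.choose L (m - 1) * Dbig ^ (m - 1) : ℕ) : ℝ≥0∞) * p ^ m
      ≤ ENNReal.ofReal ((n : ℝ) ^ (-c₃)) := by
    have hΔpow_pos : (0 : ℝ) < ((Δ ^ c₁ : ℕ) : ℝ) := by positivity
    set r : ℝ := ((Δ ^ c₁ : ℕ) : ℝ)⁻¹ with hrdef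
    have hrpos : 0 < r := by positivity
    have hpe : p = ENNReal.ofReal r := by
      rw [hpdef, hrdef, ENNReal.ofReal_inv_of_pos hΔpow_pos]
      congr 1
      rw [ENNReal.ofReal_natCast]
      push_cast
      ring
    have hlhs : (n : ℝ≥0∞) * ((Nat.choose L (m - 1) * Dbig ^ (m - 1) : ℕ) : ℝ≥0∞) * p ^ m
        = ENNReal.ofReal ((n : ℝ) * ((Nat.choose L (m - 1) * Dbig ^ (m - 1) : ℕ) : ℝ) * r ^ m) := by
      rw [hpe, ← ENNReal.ofReal_pow hrpos.le, ← ENNReal.ofReal_natCast n,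
        ← ENNReal.ofReal_natCast (Nat.choose L (m - 1) * Dbig ^ (m - 1)),
        ← ENNReal.ofReal_mul (by positivity), ← ENNReal.ofReal_mul (by positivity)]
    rw [hlhs]
    refine ENNReal.ofReal_le_ofReal ?_
    -- real inequality
    have hcount : ((Nat.choose L (m - 1) * Dbig ^ (m - 1) : ℕ) : ℝ)
        ≤ (((4 * Dbig) ^ (m - 1) : ℕ) : ℝ) := by
      have h1 : Nat.choose L (m - 1) * Dbig ^ (m - 1) ≤ (4 * Dbig) ^ (m - 1) := by
        calc Nat.choose L (m - 1) * Dbig ^ (m - 1) ≤ 2 ^ L * Dbig ^ (m - 1) :=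
              Nat.mul_le_mul_right _ (choose_le_two_pow' L (m - 1) (by omega))
          _ = 4 ^ (m - 1) * Dbig ^ (m - 1) := by
              rw [hLdef, pow_mul]
              norm_num
          _ = (4 * Dbig) ^ (m - 1) := (mul_pow 4 Dbig (m - 1)).symm
      exact_mod_cast h1
    have h4D1 : (1 : ℝ) ≤ 4 * (Dbig : ℝ) := by
      have h : (1 : ℕ) ≤ 4 * Dbig := by omega
      exact_mod_cast h
    have hmono : (((4 * Dbig) ^ (m - 1) : ℕ) : ℝ) ≤ ((4 * Dbig : ℕ) : ℝ) ^ m := by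
      push_cast
      exact pow_le_pow_right₀ h4D1 (by omega)
    have hprod : ((4 * Dbig : ℕ) : ℝ) ^ m * r ^ m = (q⁻¹) ^ m := by
      rw [← mul_pow]
      congr 1
      rw [hrdef, hq]
      field_simp
    have hqpos : 0 < q := lt_trans one_pos hqgt1
    have hsm : (q⁻¹) ^ m = Real.exp ((m : ℝ) * (-Lq)) := by
      have hspos : 0 < q⁻¹ := by positivity
      rw [← Real.exp_log hspos, ← Real.exp_nat_mul, Real.log_inv, hLq]
    have hrhs : (n : ℝ) ^ (-c₃) = Real.exp (Real.log n * (-c₃)) :=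
      Real.rpow_def_of_pos hnpos _
    have hkey : (1 + c₃) * Real.log n ≤ (m : ℝ) * Lq := by
      rw [div_le_iff₀ hLqpos] at hmreal
      exact hmreal
    calc (n : ℝ) * ((Nat.choose L (m - 1) * Dbig ^ (m - 1) : ℕ) : ℝ) * r ^ m
        ≤ (n : ℝ) * ((4 * Dbig : ℕ) : ℝ) ^ m * r ^ m := by
          refine mul_le_mul_of_nonneg_right (mul_le_mul_of_nonneg_left
            (le_trans hcount hmono) hnpos.le) (by positivity)
      _ = (n : ℝ) * (((4 * Dbig : ℕ) : ℝ) ^ m * r ^ m) := by ring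
      _ = (n : ℝ) * (q⁻¹) ^ m := by rw [hprod]
      _ = Real.exp (Real.log n) * Real.exp ((m : ℝ) * (-Lq)) := by
          rw [Real.exp_log hnpos, hsm]
      _ = Real.exp (Real.log n + (m : ℝ) * (-Lq)) := (Real.exp_add _ _).symm
      _ ≤ Real.exp (Real.log n * (-c₃)) := by
          refine Real.exp_le_exp.mpr ?_
          nlinarith [hkey, hlogn]
      _ = (n : ℝ) ^ (-c₃) := hrhs.symm
  -- put everything together
  set GoodSet : Set (∀ v, Ω v) := {ω | ∀ (v : V) (hv : v ∈ B ω),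
      (({u : V | ∃ hu : u ∈ B ω,
          (G.induce (B ω)).Reachable ⟨v, hv⟩ ⟨u, hu⟩}).ncard : ℝ)
        ≤ (Bs : ℝ) * ((1 + c₃) / Lq + 2) * Real.log n} with hGoodSet
  have hbadle : Measure.pi μ GoodSetᶜ ≤ ENNReal.ofReal ((n : ℝ) ^ (-c₃)) := by
    refine le_trans (measure_mono hcover) (le_trans (measure_iUnion_le _) ?_)
    have hstep : ∀ v : V, Measure.pi μ (⋃ w ∈ GoodW v, Ev v w)
        ≤ ((Nat.choose L (m - 1) * Dbig ^ (m - 1) : ℕ) : ℝ≥0∞) * p ^ m := by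
      intro v
      refine le_trans (measure_biUnion_finset_le _ _) ?_
      have hcount : (GoodW v).card ≤ Nat.choose L (m - 1) * Dbig ^ (m - 1) := by
        refine le_trans (Finset.card_le_card ?_) (card_words_le L (m - 1) Dbig hDpos)
        intro w hw
        simp only [hGoodWdef, Finset.mem_filter, Finset.mem_univ, true_and] at hw ⊢
        exact hw.1
      calc ∑ w ∈ GoodW v, Measure.pi μ (Ev v w) ≤ ∑ w ∈ GoodW v, p ^ m :=
            Finset.sum_le_sum (fun w hw => hEv v w hw)
        _ = (GoodW v).card * p ^ m := by rw [Finset.sum_const, nsmul_eq_mul]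
        _ ≤ ((Nat.choose L (m - 1) * Dbig ^ (m - 1) : ℕ) : ℝ≥0∞) * p ^ m := by
            refine mul_le_mul_left ?_ _
            exact_mod_cast hcount
    calc ∑' v : V, Measure.pi μ (⋃ w ∈ GoodW v, Ev v w)
        ≤ ∑' _v : V, ((Nat.choose L (m - 1) * Dbig ^ (m - 1) : ℕ) : ℝ≥0∞) * p ^ m :=
          ENNReal.tsum_le_tsum hstep
      _ = (Fintype.card V : ℝ≥0∞) * (((Nat.choose L (m - 1) * Dbig ^ (m - 1) : ℕ) : ℝ≥0∞) * p ^ m) := by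
          rw [tsum_fintype, Finset.sum_const, Finset.card_univ, nsmul_eq_mul]
      _ ≤ ENNReal.ofReal ((n : ℝ) ^ (-c₃)) := by
          rw [hcardV, ← mul_assoc]
          exact harith
  have hsplit : (1 : ℝ≥0∞) ≤ Measure.pi μ GoodSet + Measure.pi μ GoodSetᶜ := by
    have : (1 : ℝ≥0∞) = Measure.pi μ (Set.univ : Set (∀ v, Ω v)) := by
      rw [measure_univ]
    rw [this, ← Set.union_compl_self GoodSet]
    exact measure_union_le _ _
  rw [tsub_le_iff_right]
  calc (1 : ℝ≥0∞) ≤ Measure.pi μ GoodSet + Measure.pi μ GoodSetᶜ := hsplit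
    _ ≤ Measure.pi μ GoodSet + ENNReal.ofReal ((n : ℝ) ^ (-c₃)) :=
        add_le_add le_rfl hbadle
end
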